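/- For two completely positive maps Φ, Ψ with Choi matrices Φ_μ, Ψ_μ and any density matrix ρ, the conditional fidelity Tr√(Φ_μ(ρ)^{1/2} Ψ_μ(ρ) Φ_μ(ρ)^{1/2}) equals Tr|Φ_μ^{1/2} (ρ̃ ⊗ I) Ψ_μ^{1/2}|, where Φ_μ(ρ) = (ρ̃^{1/2} ⊗ I) Φ_μ (ρ̃^{1/2} ⊗ I). -/

import Mathlib

open Matrix Kronecker
open scoped ComplexOrder

open scoped Classical in
/-- Positive semidefinite square root (zero if the matrix is not PSD). -/
noncomputable def psqrt {n : Type*} [Fintype n] [DecidableEq n] (A : Matrix n n ℂ) : Matrix n n ℂ :=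
  if h : A.PosSemidef then
    h.1.eigenvectorUnitary.1 * diagonal ((↑) ∘ (Real.sqrt ∘ h.1.eigenvalues)) *
      (star h.1.eigenvectorUnitary : Matrix n n ℂ)
  else 0

/-- Matrix absolute value `|A| = √(Aᴴ A)`. -/
noncomputable def matAbs {n : Type*} [Fintype n] [DecidableEq n] (A : Matrix n n ℂ) : Matrix n n ℂ :=
  psqrt (Aᴴ * A)

/-! With `X = √ρ̃ ⊗ I` and `P = X Φμ X`, write `X Ψμ X = M†M` for `M = √Ψμ X`. Then
`√P M†M √P = |M √P|²`, and since `Y†Y` and `YY†` have the same characteristic polynomial,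
`Tr |Y| = Tr |Y†|` turns the fidelity into `Tr √(M P M†)`. Finally `M P M† = K†K` for
`K = √Φμ (ρ̃ ⊗ I) √Ψμ`, because `X² = ρ̃ ⊗ I`. -/

section

variable {ι : Type*} [Fintype ι] [DecidableEq ι] {A : Matrix ι ι ℂ}

lemma psqrt_eq_cfc (hA : A.PosSemidef) : psqrt A = cfc Real.sqrt A := by
  rw [psqrt, dif_pos hA, hA.1.cfc_eq, IsHermitian.cfc, Unitary.conjStarAlgAut_apply]
  rfl

lemma isHermitian_psqrt (A : Matrix ι ι ℂ) : (psqrt A).IsHermitian := by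
  by_cases hA : A.PosSemidef
  · rw [psqrt_eq_cfc hA]
    exact cfc_predicate _ _
  · rw [psqrt, dif_neg hA]
    exact isHermitian_zero

lemma psqrt_mul_self (hA : A.PosSemidef) : psqrt A * psqrt A = A := by
  rw [psqrt_eq_cfc hA, ← cfc_mul Real.sqrt Real.sqrt A]
  conv_rhs => rw [← cfc_id' ℝ A (ha := hA.1)]
  refine cfc_congr fun x hx => Real.mul_self_sqrt ?_
  obtain ⟨i, rfl⟩ := hA.1.spectrum_real_eq_range_eigenvalues ▸ hx
  exact hA.eigenvalues_nonneg i

lemma mul_mul_conjTranspose_eq_conjTranspose_mul_self {κ : Type*} (hA : A.PosSemidef)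
    (N : Matrix κ ι ℂ) : N * A * Nᴴ = (psqrt A * Nᴴ)ᴴ * (psqrt A * Nᴴ) := by
  conv_lhs => rw [← psqrt_mul_self hA]
  simp only [conjTranspose_mul, conjTranspose_conjTranspose, (isHermitian_psqrt A).eq,
    Matrix.mul_assoc]

lemma trace_psqrt (hA : A.PosSemidef) :
    (psqrt A).trace = ∑ i, ((√(hA.1.eigenvalues i) : ℝ) : ℂ) := by
  rw [psqrt, dif_pos hA, trace_mul_cycle, Unitary.coe_star_mul_self, Matrix.one_mul,
    trace_diagonal]
  rfl

lemma trace_psqrt_eq_of_charpoly_eq {B : Matrix ι ι ℂ} (hA : A.PosSemidef) (hB : B.PosSemidef)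
    (h : A.charpoly = B.charpoly) : (psqrt A).trace = (psqrt B).trace := by
  rw [trace_psqrt hA, trace_psqrt hB, (hA.1.eigenvalues_eq_eigenvalues_iff hB.1).2 h]

lemma trace_matAbs_conjTranspose (Y : Matrix ι ι ℂ) : (matAbs Yᴴ).trace = (matAbs Y).trace := by
  rw [matAbs, matAbs, conjTranspose_conjTranspose]
  exact trace_psqrt_eq_of_charpoly_eq (posSemidef_self_mul_conjTranspose Y)
    (posSemidef_conjTranspose_mul_self Y) (charpoly_mul_comm _ _)

/-- Both sides are `Tr |M √A|`, computed once as `Tr |Y|` and once as `Tr |Yᴴ|`. -/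
lemma trace_psqrt_psqrt_mul_mul_psqrt (hA : A.PosSemidef) (M : Matrix ι ι ℂ) :
    (psqrt (psqrt A * (Mᴴ * M) * psqrt A)).trace = (psqrt (M * A * Mᴴ)).trace := by
  have hsqrt := (isHermitian_psqrt A).eq
  calc (psqrt (psqrt A * (Mᴴ * M) * psqrt A)).trace
      = (matAbs (M * psqrt A)).trace := by
        rw [matAbs, conjTranspose_mul, hsqrt]
        simp only [Matrix.mul_assoc]
    _ = (matAbs (M * psqrt A)ᴴ).trace := (trace_matAbs_conjTranspose _).symm
    _ = (psqrt (M * A * Mᴴ)).trace := by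
        rw [mul_mul_conjTranspose_eq_conjTranspose_mul_self hA, matAbs, conjTranspose_mul, hsqrt]

end

theorem conditional_fidelity_eq_general {m n : Type*} [Fintype m] [DecidableEq m]
    [Fintype n] [DecidableEq n]
    (Φμ Ψμ : Matrix (n × m) (n × m) ℂ) (hΦ : Φμ.PosSemidef) (hΨ : Ψμ.PosSemidef)
    (ρ : Matrix n n ℂ) (hρ : ρ.PosSemidef) :
    (psqrt (psqrt ((psqrt ρᵀ ⊗ₖ (1 : Matrix m m ℂ)) * Φμ * (psqrt ρᵀ ⊗ₖ (1 : Matrix m m ℂ))) *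
        ((psqrt ρᵀ ⊗ₖ (1 : Matrix m m ℂ)) * Ψμ * (psqrt ρᵀ ⊗ₖ (1 : Matrix m m ℂ))) *
        psqrt ((psqrt ρᵀ ⊗ₖ (1 : Matrix m m ℂ)) * Φμ * (psqrt ρᵀ ⊗ₖ (1 : Matrix m m ℂ))))).trace =
      (matAbs (psqrt Φμ * (ρᵀ ⊗ₖ (1 : Matrix m m ℂ)) * psqrt Ψμ)).trace := by
  set X := psqrt ρᵀ ⊗ₖ (1 : Matrix m m ℂ)
  have hX : Xᴴ = X := by
    rw [conjTranspose_kronecker, (isHermitian_psqrt _).eq, conjTranspose_one]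
  have hXX : X * X = ρᵀ ⊗ₖ 1 := by
    rw [← mul_kronecker_mul, psqrt_mul_self hρ.transpose, Matrix.one_mul]
  have hP : (X * Φμ * X).PosSemidef := by
    simpa only [hX] using hΦ.mul_mul_conjTranspose_same X
  have hQ : X * Ψμ * X = (psqrt Ψμ * X)ᴴ * (psqrt Ψμ * X) := by
    simpa only [hX] using mul_mul_conjTranspose_eq_conjTranspose_mul_self hΨ X
  have hK : (psqrt Ψμ * (X * X))ᴴ = (ρᵀ ⊗ₖ 1) * psqrt Ψμ := by
    rw [conjTranspose_mul, conjTranspose_mul, hX, (isHermitian_psqrt Ψμ).eq, hXX]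
  rw [hQ, trace_psqrt_psqrt_mul_mul_psqrt hP, matAbs]
  congr 2
  calc psqrt Ψμ * X * (X * Φμ * X) * (psqrt Ψμ * X)ᴴ
      = psqrt Ψμ * (X * X) * Φμ * (psqrt Ψμ * (X * X))ᴴ := by
        simp only [conjTranspose_mul, hX, Matrix.mul_assoc]
    _ = _ := by
        rw [mul_mul_conjTranspose_eq_conjTranspose_mul_self hΦ, hK, Matrix.mul_assoc]

theorem conditional_fidelity_eq {m n : Type*} [Fintype m] [DecidableEq m]
    [Fintype n] [DecidableEq n]
    (Φμ Ψμ : Matrix (n × m) (n × m) ℂ) (hΦ : Φμ.PosSemidef) (hΨ : Ψμ.PosSemidef)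
    (ρ : Matrix n n ℂ) (hρ : ρ.PosSemidef) (hρ1 : ρ.trace = 1) :
    (psqrt (psqrt ((psqrt ρᵀ ⊗ₖ (1 : Matrix m m ℂ)) * Φμ * (psqrt ρᵀ ⊗ₖ (1 : Matrix m m ℂ))) *
        ((psqrt ρᵀ ⊗ₖ (1 : Matrix m m ℂ)) * Ψμ * (psqrt ρᵀ ⊗ₖ (1 : Matrix m m ℂ))) *
        psqrt ((psqrt ρᵀ ⊗ₖ (1 : Matrix m m ℂ)) * Φμ * (psqrt ρᵀ ⊗ₖ (1 : Matrix m m ℂ))))).trace =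
      (matAbs (psqrt Φμ * (ρᵀ ⊗ₖ (1 : Matrix m m ℂ)) * psqrt Ψμ)).trace :=
  conditional_fidelity_eq_general Φμ Ψμ hΦ hΨ ρ hρ
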